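/- Let G=(V,E) be a finite simple undirected graph, let S₀ ⊆ V be nonempty, let T be a positive integer, and let τ be any stopping time for the volume-biased evolving set process with τ ≤ T almost surely. Define the cost of a sample path by cost(S₀,…,S_t) = μ(S₀) + Σ_{j=1}^{t} ( μ(S_j Δ S_{j-1}) + ∂(S_{j-1}) ). Then Ê_{S₀}[ cost(S₀,…,S_τ)/μ(S_τ) ] ≤ 1 + 4·√(T · log μ(V)). -/

import Mathlib

open scoped Classical symmDiff

noncomputable section

variable {V : Type*} [Fintype V] [DecidableEq V]

/-- The volume `μ(S)` of a set of vertices: the sum of the degrees. -/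
def vol (G : SimpleGraph V) [DecidableRel G.Adj] (S : Finset V) : ℝ :=
  ∑ x ∈ S, (G.degree x : ℝ)

/-- The number of edges leaving `S`, i.e. `∂(S) = e(S, Sᶜ)`. -/
def bdry (G : SimpleGraph V) [DecidableRel G.Adj] (S : Finset V) : ℝ :=
  ∑ x ∈ S, ((Sᶜ.filter (G.Adj x)).card : ℝ)

/-- The conductance `φ(S) = ∂(S)/μ(S)`. -/
def phiCond (G : SimpleGraph V) [DecidableRel G.Adj] (S : Finset V) : ℝ :=
  bdry G S / vol G S

/-- The lazy random walk kernel `p(x,y)`: `1/2` if `x = y`, `1/(2 d(x))` if `x ~ y`,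
and `0` otherwise. -/
def walkP (G : SimpleGraph V) [DecidableRel G.Adj] (x y : V) : ℝ :=
  if x = y then 1/2 else if G.Adj x y then 1 / (2 * (G.degree x : ℝ)) else 0

/-- `p(x,S) = Σ_{y∈S} p(x,y)`. -/
def pset (G : SimpleGraph V) [DecidableRel G.Adj] (x : V) (S : Finset V) : ℝ :=
  ∑ y ∈ S, walkP G x y

/-- One step of the evolving set process from `S` with threshold `u`:
`S₁ = {y : p(y,S) ≥ u}`. -/
def esStep (G : SimpleGraph V) [DecidableRel G.Adj] (S : Finset V) (u : ℝ) : Finset V :=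
  Finset.univ.filter fun y => u ≤ pset G y S

/-- The ESP transition kernel `K(S,S')`: the probability, for a uniform threshold
`U ∈ [0,1]`, that `{y : p(y,S) ≥ U} = S'`. -/
def Kk (G : SimpleGraph V) [DecidableRel G.Adj] (S S' : Finset V) : ℝ :=
  (MeasureTheory.volume {u : ℝ | u ∈ Set.Icc (0:ℝ) 1 ∧ esStep G S u = S'}).toReal

/-- The volume-biased ESP transition kernel `K̂(S,S') = (μ(S')/μ(S)) K(S,S')`. -/
def Khat (G : SimpleGraph V) [DecidableRel G.Adj] (S S' : Finset V) : ℝ :=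
  vol G S' / vol G S * Kk G S S'

/-- The cost of the sample path `(s 0, …, s t)`:
`cost = μ(S₀) + Σ_{j=1}^{t} (μ(S_j Δ S_{j-1}) + ∂(S_{j-1}))`. -/
def costPath (G : SimpleGraph V) [DecidableRel G.Adj] (s : ℕ → Finset V) (t : ℕ) : ℝ :=
  vol G (s 0) + ∑ j ∈ Finset.range t, (vol G (symmDiff (s (j+1)) (s j)) + bdry G (s j))

/-- Expectation of a path functional `f` (depending only on coordinates `0, …, T`)
over length-`(T+1)` sample paths of the Markov chain with transition kernel `κ`
started at `S₀`; the finite path is extended to an infinite one by freezing it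
after time `T`. -/
def EpathN (κ : Finset V → Finset V → ℝ) (S₀ : Finset V) (T : ℕ)
    (f : (ℕ → Finset V) → ℝ) : ℝ :=
  ∑ w : Fin (T+1) → Finset V,
    if w 0 = S₀ then
      (∏ j : Fin T, κ (w j.castSucc) (w j.succ)) *
        f (fun n => w ⟨min n T, Nat.lt_succ_of_le (min_le_right n T)⟩)
    else 0

/-- `τ` is a stopping time for the natural filtration: the event `τ = n` depends only
on the first `n+1` coordinates of the path. -/
def IsStopping (τ : (ℕ → Finset V) → ℕ) : Prop :=
  ∀ (s s' : ℕ → Finset V) (n : ℕ), τ s = n → (∀ i ≤ n, s' i = s i) → τ s' = n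

/-!
The volume-biased chain is the Doob transform of the evolving set process by the harmonic
function `μ`, so `Ê[cost / μ(S_τ)] = E[μ(S_T) cost / μ(S_τ)] / μ(S₀)`, and optional stopping
replaces `μ(S_T)` by `μ(S_τ)`. One step of the process moves `E[μ(S₁ Δ S)] = ∂(S)`, so the
expected cost is at most `μ(S₀) + 2 ∑_{j<T} E ∂(S_j)`, and Cauchy–Schwarz against the martingale
`μ(S_j)` gives `E ∂(S_j) ≤ √(μ(S₀) E[μ(S_j) φ(S_j)²])`. By the Morris–Peres bound
`E √μ(S₁) ≤ √μ(S) (1 - φ(S)² / 8)`, the drift of `μ log μ` is at least `μ φ² / 4`, while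
`E[μ(S_T) log μ(S_T)] ≤ μ(S₀) log μ(V)`; hence `∑_j E[μ(S_j) φ(S_j)²] ≤ 4 μ(S₀) log μ(V)`, and
Cauchy–Schwarz over `j` gives the bound.
-/

open Finset MeasureTheory Real

variable {G : SimpleGraph V} [DecidableRel G.Adj]

section Graph

omit [DecidableEq V] in
lemma vol_eq_natCast (S : Finset V) : vol G S = ((∑ x ∈ S, G.degree x : ℕ) : ℝ) := by
  simp [vol]

omit [DecidableEq V] in
lemma vol_nonneg (S : Finset V) : 0 ≤ vol G S := by
  rw [vol_eq_natCast]; positivity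

lemma bdry_nonneg (S : Finset V) : 0 ≤ bdry G S :=
  sum_nonneg fun _ _ => by positivity

omit [DecidableEq V] in
lemma card_filter_adj_le_degree (S : Finset V) (y : V) :
    #(S.filter (G.Adj y)) ≤ G.degree y := by
  rw [← SimpleGraph.card_neighborFinset_eq_degree, SimpleGraph.neighborFinset_eq_filter]
  exact card_le_card (filter_subset_filter _ (subset_univ S))

lemma card_filter_adj_add_card_filter_adj_compl (S : Finset V) (y : V) :
    (#(S.filter (G.Adj y)) : ℝ) + #(Sᶜ.filter (G.Adj y)) = G.degree y := by
  rw [← SimpleGraph.card_neighborFinset_eq_degree, SimpleGraph.neighborFinset_eq_filter,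
    ← card_filter_add_card_filter_not (s := univ.filter (G.Adj y)) (· ∈ S)]
  push_cast
  congr 3 <;> ext <;> simp [and_comm]

omit [Fintype V] [DecidableEq V] in
lemma sum_card_filter_adj_comm (A B : Finset V) :
    ∑ x ∈ A, (#(B.filter (G.Adj x)) : ℝ) = ∑ y ∈ B, (#(A.filter (G.Adj y)) : ℝ) := by
  have := sum_card_bipartiteAbove_eq_sum_card_bipartiteBelow (s := A) (t := B) (r := G.Adj)
  simp only [bipartiteAbove, bipartiteBelow, G.adj_comm _] at this
  exact_mod_cast this

lemma pset_eq (y : V) (S : Finset V) :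
    pset G y S = (if y ∈ S then 1 / 2 else 0) + #(S.filter (G.Adj y)) / (2 * G.degree y) := by
  have hsplit : ∀ z, walkP G y z =
      (if y = z then 1 / 2 else 0) + (if G.Adj y z then 1 / (2 * G.degree y : ℝ) else 0) := by
    intro z
    by_cases h : y = z
    · subst h; simp [walkP]
    · simp [walkP, h]
  simp only [pset, hsplit, sum_add_distrib, sum_ite_eq, ← sum_filter, sum_const, nsmul_eq_mul,
    mul_one_div]

lemma degree_mul_pset (y : V) (S : Finset V) :
    G.degree y * pset G y S =
      (if y ∈ S then (G.degree y : ℝ) / 2 else 0) + #(S.filter (G.Adj y)) / 2 := by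
  rw [pset_eq]
  rcases Nat.eq_zero_or_pos (G.degree y) with h | h
  · have : #(S.filter (G.Adj y)) = 0 := Nat.le_zero.mp (h ▸ card_filter_adj_le_degree S y)
    simp [h, this]
  · have : (G.degree y : ℝ) ≠ 0 := by positivity
    rw [mul_add]
    congr 1
    · split_ifs <;> ring
    · field_simp

omit [DecidableEq V] in
lemma sum_card_filter_adj (S : Finset V) : ∑ y, (#(S.filter (G.Adj y)) : ℝ) = vol G S := by
  rw [sum_card_filter_adj_comm]
  refine sum_congr rfl fun z _ => ?_
  rw [← SimpleGraph.card_neighborFinset_eq_degree, SimpleGraph.neighborFinset_eq_filter]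

lemma bdry_eq_sum_compl (S : Finset V) :
    bdry G S = ∑ y ∈ Sᶜ, (#(S.filter (G.Adj y)) : ℝ) :=
  sum_card_filter_adj_comm S Sᶜ

lemma sum_mem_card_filter_adj (S : Finset V) :
    ∑ y ∈ S, (#(S.filter (G.Adj y)) : ℝ) = vol G S - bdry G S := by
  rw [vol, bdry, ← sum_sub_distrib]
  refine sum_congr rfl fun y _ => ?_
  linarith [card_filter_adj_add_card_filter_adj_compl (G := G) S y]

lemma bdry_le_vol (S : Finset V) : bdry G S ≤ vol G S := by
  have : 0 ≤ ∑ y ∈ S, (#(S.filter (G.Adj y)) : ℝ) := sum_nonneg fun _ _ => by positivity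
  linarith [sum_mem_card_filter_adj (G := G) S]

lemma phiCond_nonneg (S : Finset V) : 0 ≤ phiCond G S :=
  div_nonneg (bdry_nonneg S) (vol_nonneg S)

lemma phiCond_le_one (S : Finset V) : phiCond G S ≤ 1 :=
  div_le_one_of_le₀ (bdry_le_vol S) (vol_nonneg S)

lemma vol_mul_phiCond (S : Finset V) : vol G S * phiCond G S = bdry G S := by
  rcases (vol_nonneg (G := G) S).eq_or_lt with h | h
  · rw [← h, zero_mul]
    exact le_antisymm (bdry_nonneg S) (h ▸ bdry_le_vol S)
  · exact mul_div_cancel₀ _ h.ne'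

lemma sum_ite_mem_add_compl {M : Type*} [AddCommMonoid M] (S : Finset V) (f g : V → M) :
    ∑ y, (if y ∈ S then f y else g y) = ∑ y ∈ S, f y + ∑ y ∈ Sᶜ, g y := by
  rw [← sum_add_sum_compl S]
  congr 1
  · exact sum_congr rfl fun y hy => if_pos hy
  · exact sum_congr rfl fun y hy => if_neg (mem_compl.mp hy)

omit [DecidableEq V] in
lemma card_filter_adj_div_le_half (S : Finset V) (y : V) :
    (#(S.filter (G.Adj y)) : ℝ) / (2 * G.degree y) ≤ 1 / 2 := by
  refine div_le_of_le_mul₀ (by positivity) (by norm_num) ?_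
  have : (#(S.filter (G.Adj y)) : ℝ) ≤ G.degree y := by
    exact_mod_cast card_filter_adj_le_degree S y
  linarith

lemma pset_nonneg (y : V) (S : Finset V) : 0 ≤ pset G y S := by
  rw [pset_eq]; positivity

lemma pset_le_one (y : V) (S : Finset V) : pset G y S ≤ 1 := by
  rw [pset_eq]
  have := card_filter_adj_div_le_half (G := G) S y
  split_ifs <;> linarith

lemma half_le_pset {y : V} {S : Finset V} (h : y ∈ S) : 1 / 2 ≤ pset G y S := by
  rw [pset_eq, if_pos h]
  have : (0 : ℝ) ≤ #(S.filter (G.Adj y)) / (2 * G.degree y) := by positivity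
  linarith

lemma pset_le_half {y : V} {S : Finset V} (h : y ∉ S) : pset G y S ≤ 1 / 2 := by
  rw [pset_eq, if_neg h, zero_add]
  exact card_filter_adj_div_le_half S y

lemma sum_degree_mul_pset (S : Finset V) : ∑ y, G.degree y * pset G y S = vol G S := by
  simp only [degree_mul_pset, sum_add_distrib, ← sum_div, sum_card_filter_adj, sum_ite_mem,
    univ_inter]
  rw [vol]
  ring

end Graph

section EvolvingSetKernel

lemma mem_esStep {y : V} {S : Finset V} {u : ℝ} : y ∈ esStep G S u ↔ u ≤ pset G y S := by
  simp [esStep]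

lemma measurableSet_esStep_preimage_singleton (S S' : Finset V) :
    MeasurableSet (esStep G S ⁻¹' {S'}) := by
  have : esStep G S ⁻¹' {S'} = ⋂ y, {u | u ≤ pset G y S ↔ y ∈ S'} := by
    ext u
    simp [Finset.ext_iff, mem_esStep]
  rw [this]
  refine MeasurableSet.iInter fun y => ?_
  by_cases h : y ∈ S'
  · simp only [h, iff_true]
    exact measurableSet_Iic
  · simp only [h, iff_false, not_le]
    exact measurableSet_Ioi

/-- Transition kernel of `esStep` with the threshold drawn from `μ`: `Kk` is the uniform law on
`[0,1]`, whose two halves are treated separately in the Morris–Peres bound. -/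
def esKernel (G : SimpleGraph V) [DecidableRel G.Adj] (μ : Measure ℝ) (S S' : Finset V) : ℝ :=
  μ.real (esStep G S ⁻¹' {S'})

lemma esKernel_nonneg (μ : Measure ℝ) (S S' : Finset V) : 0 ≤ esKernel G μ S S' :=
  measureReal_nonneg

variable (μ : Measure ℝ) [IsFiniteMeasure μ]

lemma sum_esKernel_filter (S : Finset V) (P : Finset V → Prop) [DecidablePred P] :
    ∑ S' ∈ univ.filter P, esKernel G μ S S' = μ.real {u | P (esStep G S u)} := by
  simp only [esKernel]
  rw [sum_measureReal_preimage_singleton _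
    fun S' _ => measurableSet_esStep_preimage_singleton S S']
  congr 1
  ext u
  simp

lemma sum_esKernel (S : Finset V) : ∑ S', esKernel G μ S S' = μ.real Set.univ := by
  simpa using sum_esKernel_filter μ S fun _ => True

lemma sum_esKernel_mul_vol (F : Finset V → Finset V) (S : Finset V) :
    ∑ S', esKernel G μ S S' * vol G (F S') =
      ∑ y, G.degree y * μ.real {u | y ∈ F (esStep G S u)} := by
  simp only [vol, mul_sum]
  rw [sum_comm' (t' := univ) (s' := fun y => univ.filter (y ∈ F ·)) (by simp)]
  refine sum_congr rfl fun y _ => ?_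
  rw [← sum_esKernel_filter μ S (y ∈ F ·), mul_sum]
  exact sum_congr rfl fun _ _ => mul_comm _ _

end EvolvingSetKernel

section Moments

lemma Kk_eq_esKernel (S S' : Finset V) :
    Kk G S S' = esKernel G (volume.restrict (Set.Icc 0 1)) S S' := by
  rw [esKernel, measureReal_restrict_apply (measurableSet_esStep_preimage_singleton S S'), Kk,
    measureReal_def]
  congr 2
  ext u
  simp [and_comm]

lemma Kk_nonneg (S S' : Finset V) : 0 ≤ Kk G S S' := ENNReal.toReal_nonneg

lemma Kk_eq_add (S S' : Finset V) :
    Kk G S S' = esKernel G (volume.restrict (Set.Icc 0 (1 / 2))) S S' +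
      esKernel G (volume.restrict (Set.Ioc (1 / 2) 1)) S S' := by
  have hdisj : Disjoint (Set.Icc (0 : ℝ) (1 / 2)) (Set.Ioc (1 / 2) 1) :=
    Set.disjoint_left.2 fun _ h₁ h₂ => (not_lt.2 h₁.2) h₂.1
  rw [Kk_eq_esKernel, ← Set.Icc_union_Ioc_eq_Icc (b := 1 / 2) (by norm_num) (by norm_num),
    Measure.restrict_union hdisj measurableSet_Ioc, esKernel, measureReal_add_apply]
  rfl

lemma restrict_Icc_real_Iic (a b p : ℝ) :
    (volume.restrict (Set.Icc a b)).real (Set.Iic p) = max (min p b - a) 0 := by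
  have : Set.Iic p ∩ Set.Icc a b = Set.Icc a (min p b) := by
    ext
    simp only [Set.mem_inter_iff, Set.mem_Iic, Set.mem_Icc, le_inf_iff]
    tauto
  rw [measureReal_restrict_apply measurableSet_Iic, this, Real.volume_real_Icc]

lemma restrict_Ioc_real_Iic (a b p : ℝ) :
    (volume.restrict (Set.Ioc a b)).real (Set.Iic p) = max (min p b - a) 0 := by
  rw [measureReal_restrict_apply measurableSet_Iic, Set.inter_comm, Set.Ioc_inter_Iic,
    min_comm, Real.volume_real_Ioc]

lemma setOf_mem_esStep (y : V) (S : Finset V) :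
    {u | y ∈ esStep G S u} = Set.Iic (pset G y S) :=
  Set.ext fun _ => mem_esStep

lemma sum_Kk (S : Finset V) : ∑ S', Kk G S S' = 1 := by
  simp only [Kk_eq_esKernel]
  rw [sum_esKernel, measureReal_restrict_apply_univ, Real.volume_real_Icc]
  norm_num

lemma uniform_real_setOf_mem_esStep (y : V) (S : Finset V) :
    (volume.restrict (Set.Icc 0 1)).real {u | y ∈ esStep G S u} = pset G y S := by
  rw [setOf_mem_esStep, restrict_Icc_real_Iic, min_eq_left (pset_le_one y S), sub_zero,
    max_eq_left (pset_nonneg y S)]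

lemma sum_Kk_mul_vol (S : Finset V) : ∑ S', Kk G S S' * vol G S' = vol G S := by
  simp only [Kk_eq_esKernel]
  rw [sum_esKernel_mul_vol _ (fun S' => S')]
  simp only [uniform_real_setOf_mem_esStep, sum_degree_mul_pset]

lemma Kk_mul_vol_eq_zero {S : Finset V} (h : vol G S = 0) (S' : Finset V) :
    Kk G S S' * vol G S' = 0 :=
  (sum_eq_zero_iff_of_nonneg fun _ _ => mul_nonneg (Kk_nonneg _ _) (vol_nonneg _)).1
    ((sum_Kk_mul_vol S).trans h) S' (mem_univ S')

lemma degree_mul_uniform_real_mem_symmDiff (y : V) (S : Finset V) :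
    G.degree y * (volume.restrict (Set.Icc 0 1)).real {u | y ∈ esStep G S u ∆ S} =
      if y ∈ S then (#(Sᶜ.filter (G.Adj y)) : ℝ) / 2 else (#(S.filter (G.Adj y)) : ℝ) / 2 := by
  have hp := degree_mul_pset (G := G) y S
  by_cases h : y ∈ S
  · have hset : {u | y ∈ esStep G S u ∆ S} = (Set.Iic (pset G y S))ᶜ := by
      ext u
      simp [Finset.mem_symmDiff, mem_esStep, h]
    rw [hset, measureReal_compl measurableSet_Iic, measureReal_restrict_apply_univ,
      Real.volume_real_Icc, ← setOf_mem_esStep, uniform_real_setOf_mem_esStep, if_pos h]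
    rw [if_pos h] at hp
    rw [show max ((1 : ℝ) - 0) 0 = 1 by norm_num, mul_sub, mul_one, hp]
    linarith [card_filter_adj_add_card_filter_adj_compl (G := G) S y]
  · have hset : {u | y ∈ esStep G S u ∆ S} = {u | y ∈ esStep G S u} := by
      ext u
      simp [Finset.mem_symmDiff, h]
    rw [hset, uniform_real_setOf_mem_esStep, hp, if_neg h, if_neg h, zero_add]

lemma sum_Kk_mul_vol_symmDiff (S : Finset V) :
    ∑ S', Kk G S S' * vol G (S' ∆ S) = bdry G S := by
  simp only [Kk_eq_esKernel]
  rw [sum_esKernel_mul_vol _ (· ∆ S)]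
  simp only [degree_mul_uniform_real_mem_symmDiff, sum_ite_mem_add_compl, ← sum_div,
    ← bdry_eq_sum_compl]
  rw [← bdry]
  ring

end Moments

section MorrisPeres

lemma sum_mul_le_sqrt_mul_sqrt_of_nonneg {ι : Type*} (s : Finset ι) {w f : ι → ℝ}
    (hw : ∀ i ∈ s, 0 ≤ w i) :
    ∑ i ∈ s, w i * f i ≤ √(∑ i ∈ s, w i) * √(∑ i ∈ s, w i * f i ^ 2) := by
  calc ∑ i ∈ s, w i * f i = ∑ i ∈ s, √(w i) * (√(w i) * f i) :=
        sum_congr rfl fun i hi => by rw [← mul_assoc, mul_self_sqrt (hw i hi)]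
    _ ≤ √(∑ i ∈ s, √(w i) ^ 2) * √(∑ i ∈ s, (√(w i) * f i) ^ 2) :=
        Real.sum_mul_le_sqrt_mul_sqrt s _ _
    _ = √(∑ i ∈ s, w i) * √(∑ i ∈ s, w i * f i ^ 2) := by
        congr 2 <;> refine sum_congr rfl fun i hi => ?_
        · rw [sq_sqrt (hw i hi)]
        · rw [mul_pow, sq_sqrt (hw i hi)]

lemma sqrt_one_add_add_sqrt_one_sub_le {x : ℝ} (hx : |x| ≤ 1) :
    √(1 + x) + √(1 - x) ≤ 2 - x ^ 2 / 4 := by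
  obtain ⟨hx₁, hx₂⟩ := abs_le.1 hx
  set p := √(1 + x)
  set q := √(1 - x)
  have hp : p ^ 2 = 1 + x := sq_sqrt (by linarith)
  have hq : q ^ 2 = 1 - x := sq_sqrt (by linarith)
  have hx2 : x ^ 2 ≤ 1 := by nlinarith
  have hpq : p * q ≤ 1 - x ^ 2 / 2 := by
    have hpq2 : (p * q) ^ 2 = 1 - x ^ 2 := by rw [mul_pow, hp, hq]; ring
    nlinarith [mul_nonneg (sqrt_nonneg (1 + x)) (sqrt_nonneg (1 - x))]
  nlinarith [sqrt_nonneg (1 + x), sqrt_nonneg (1 - x)]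

lemma degree_mul_lowerHalf_real_setOf_mem (y : V) (S : Finset V) :
    G.degree y * (volume.restrict (Set.Icc 0 (1 / 2))).real {u | y ∈ esStep G S u} =
      if y ∈ S then (G.degree y : ℝ) / 2 else (#(S.filter (G.Adj y)) : ℝ) / 2 := by
  have hp := degree_mul_pset (G := G) y S
  rw [setOf_mem_esStep, restrict_Icc_real_Iic, sub_zero,
    max_eq_left (le_min (pset_nonneg y S) (by norm_num))]
  by_cases h : y ∈ S
  · rw [min_eq_right (half_le_pset h), if_pos h]
    ring
  · rw [min_eq_left (pset_le_half h), hp, if_neg h, if_neg h, zero_add]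

lemma degree_mul_upperHalf_real_setOf_mem (y : V) (S : Finset V) :
    G.degree y * (volume.restrict (Set.Ioc (1 / 2) 1)).real {u | y ∈ esStep G S u} =
      if y ∈ S then (#(S.filter (G.Adj y)) : ℝ) / 2 else 0 := by
  have hp := degree_mul_pset (G := G) y S
  rw [setOf_mem_esStep, restrict_Ioc_real_Iic, min_eq_left (pset_le_one y S)]
  by_cases h : y ∈ S
  · rw [max_eq_left (sub_nonneg.2 (half_le_pset h)), if_pos h, mul_sub, hp, if_pos h]
    ring
  · rw [max_eq_right (sub_nonpos.2 (pset_le_half h)), if_neg h, mul_zero]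

lemma sum_lowerHalf_mul_vol (S : Finset V) :
    ∑ S', esKernel G (volume.restrict (Set.Icc 0 (1 / 2))) S S' * vol G S' =
      (vol G S + bdry G S) / 2 := by
  rw [sum_esKernel_mul_vol _ (fun S' => S')]
  simp only [degree_mul_lowerHalf_real_setOf_mem, sum_ite_mem_add_compl, ← sum_div,
    ← bdry_eq_sum_compl]
  rw [vol]
  ring

lemma sum_upperHalf_mul_vol (S : Finset V) :
    ∑ S', esKernel G (volume.restrict (Set.Ioc (1 / 2) 1)) S S' * vol G S' =
      (vol G S - bdry G S) / 2 := by
  rw [sum_esKernel_mul_vol _ (fun S' => S')]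
  simp only [degree_mul_upperHalf_real_setOf_mem, sum_ite_mem_add_compl, ← sum_div,
    sum_mem_card_filter_adj, sum_const_zero, add_zero]

lemma sum_esKernel_mul_sqrt_vol_le (μ : Measure ℝ) [IsFiniteMeasure μ] {S : Finset V} {t : ℝ}
    (hμ : μ.real Set.univ = 1 / 2)
    (hvol : ∑ S', esKernel G μ S S' * vol G S' = vol G S * (1 + t) / 2) :
    ∑ S', esKernel G μ S S' * √(vol G S') ≤ √(vol G S) / 2 * √(1 + t) :=
  calc ∑ S', esKernel G μ S S' * √(vol G S')
      ≤ √(∑ S', esKernel G μ S S') * √(∑ S', esKernel G μ S S' * √(vol G S') ^ 2) :=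
        sum_mul_le_sqrt_mul_sqrt_of_nonneg univ fun S' _ => esKernel_nonneg μ S S'
    _ = √(vol G S) / 2 * √(1 + t) := by
        simp only [sq_sqrt (vol_nonneg _), hvol, sum_esKernel, hμ]
        rw [← sqrt_mul (by norm_num),
          show 1 / 2 * (vol G S * (1 + t) / 2) = vol G S / 2 ^ 2 * (1 + t) by ring,
          sqrt_mul (div_nonneg (vol_nonneg S) (by norm_num)), sqrt_div' _ (by norm_num),
          sqrt_sq zero_le_two]

/-- Morris–Peres: the thresholds `U ≤ 1/2` and `U > 1/2` each have probability `1/2` and give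
expected volume `μ(S) (1 ± φ(S)) / 2`; Cauchy–Schwarz on each half, then concavity of `√`. -/
lemma sum_Kk_mul_sqrt_vol_le (S : Finset V) :
    ∑ S', Kk G S S' * √(vol G S') ≤ √(vol G S) * (1 - phiCond G S ^ 2 / 8) := by
  set φ := phiCond G S
  have hb : bdry G S = vol G S * φ := (vol_mul_phiCond S).symm
  have hφ : |φ| ≤ 1 := abs_le.2 ⟨by linarith [phiCond_nonneg (G := G) S], phiCond_le_one S⟩
  have hlow := sum_esKernel_mul_sqrt_vol_le (G := G) (S := S) (t := φ)
    (volume.restrict (Set.Icc 0 (1 / 2)))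
    (by rw [measureReal_restrict_apply_univ, Real.volume_real_Icc]; norm_num)
    (by rw [sum_lowerHalf_mul_vol, hb]; ring)
  have hup := sum_esKernel_mul_sqrt_vol_le (G := G) (S := S) (t := -φ)
    (volume.restrict (Set.Ioc (1 / 2) 1))
    (by rw [measureReal_restrict_apply_univ, Real.volume_real_Ioc]; norm_num)
    (by rw [sum_upperHalf_mul_vol, hb]; ring)
  calc ∑ S', Kk G S S' * √(vol G S')
      = ∑ S', esKernel G (volume.restrict (Set.Icc 0 (1 / 2))) S S' * √(vol G S') +
          ∑ S', esKernel G (volume.restrict (Set.Ioc (1 / 2) 1)) S S' * √(vol G S') := by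
        rw [← sum_add_distrib]
        exact sum_congr rfl fun S' _ => by rw [Kk_eq_add, add_mul]
    _ ≤ √(vol G S) / 2 * (√(1 + φ) + √(1 - φ)) := by
        rw [mul_add, sub_eq_add_neg]
        exact add_le_add hlow hup
    _ ≤ √(vol G S) / 2 * (2 - φ ^ 2 / 4) := by
        gcongr
        exact sqrt_one_add_add_sqrt_one_sub_le hφ
    _ = √(vol G S) * (1 - φ ^ 2 / 8) := by ring

end MorrisPeres

section EntropyDrift

lemma mul_log_sub_log_le {a b : ℝ} (ha : 0 ≤ a) (hb : 0 < b) :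
    a * (log b - log a) ≤ 2 * (√a * √b - a) := by
  rcases ha.eq_or_lt with rfl | ha
  · simp
  have hr : log b - log a ≤ 2 * (√b / √a - 1) := by
    have := log_le_sub_one_of_pos (div_pos (sqrt_pos.2 hb) (sqrt_pos.2 ha))
    rw [log_div (sqrt_pos.2 hb).ne' (sqrt_pos.2 ha).ne', log_sqrt hb.le, log_sqrt ha.le] at this
    linarith
  calc a * (log b - log a) ≤ a * (2 * (√b / √a - 1)) := mul_le_mul_of_nonneg_left hr ha.le
    _ = 2 * (√a * √b - a) := by
        have : √a ≠ 0 := (sqrt_pos.2 ha).ne'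
        field_simp
        linear_combination (-√b) * mul_self_sqrt ha.le

/-- From the Morris–Peres bound through `log x ≤ x - 1` at `x = √(μ(S) / μ(S₁))`. -/
lemma add_le_sum_Kk_mul_vol_mul_log (S : Finset V) :
    vol G S * log (vol G S) + vol G S * phiCond G S ^ 2 / 4 ≤
      ∑ S', Kk G S S' * (vol G S' * log (vol G S')) := by
  rcases (vol_nonneg (G := G) S).eq_or_lt with hv | hv
  · have : ∀ S', Kk G S S' * (vol G S' * log (vol G S')) = 0 := fun S' => by
      rw [← mul_assoc, Kk_mul_vol_eq_zero hv.symm, zero_mul]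
    simp [this, ← hv]
  set v := vol G S
  have hpt : ∀ S', Kk G S S' * (vol G S' * (log v - log (vol G S'))) ≤
      2 * (√v * (Kk G S S' * √(vol G S')) - Kk G S S' * vol G S') := fun S' =>
    (mul_le_mul_of_nonneg_left (mul_log_sub_log_le (vol_nonneg S') hv) (Kk_nonneg S S')).trans_eq
      (by ring)
  have hsum := sum_le_sum fun S' (_ : S' ∈ univ) => hpt S'
  simp only [mul_sub, sum_sub_distrib, ← mul_sum, sum_Kk_mul_vol] at hsum
  have hlog : ∑ S', Kk G S S' * (vol G S' * log v) = v * log v := by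
    simp only [← mul_assoc, ← sum_mul, sum_Kk_mul_vol, v]
  have hmp := mul_le_mul_of_nonneg_left (sum_Kk_mul_sqrt_vol_le (G := G) S) (sqrt_nonneg v)
  rw [← mul_assoc, mul_self_sqrt hv.le] at hmp
  linarith

end EntropyDrift

section PathExpectation

variable {κ : Finset V → Finset V → ℝ} {S₀ : Finset V}

def pathWeight (κ : Finset V → Finset V → ℝ) (S₀ : Finset V) (T : ℕ)
    (w : Fin (T + 1) → Finset V) : ℝ :=
  if w 0 = S₀ then ∏ j : Fin T, κ (w j.castSucc) (w j.succ) else 0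

def frozenPath (T : ℕ) (w : Fin (T + 1) → Finset V) : ℕ → Finset V :=
  fun n => w ⟨min n T, Nat.lt_succ_of_le (min_le_right n T)⟩

def pathSnoc (s : ℕ → Finset V) (n : ℕ) (S' : Finset V) : ℕ → Finset V :=
  fun i => if i ≤ n then s i else S'

omit [Fintype V] [DecidableEq V] in
lemma frozenPath_zero {T : ℕ} (w : Fin (T + 1) → Finset V) : frozenPath T w 0 = w 0 := by
  simp [frozenPath]

omit [Fintype V] [DecidableEq V] in
lemma frozenPath_self {n : ℕ} (w : Fin (n + 1) → Finset V) : frozenPath n w n = w (Fin.last n) := by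
  simp [frozenPath, Fin.last]

omit [Fintype V] [DecidableEq V] in
lemma frozenPath_snoc {n : ℕ} (w : Fin (n + 1) → Finset V) (S' : Finset V) :
    frozenPath (n + 1) (Fin.snoc w S' : Fin (n + 2) → Finset V) =
      pathSnoc (frozenPath n w) n S' := by
  funext i
  unfold frozenPath pathSnoc
  split_ifs with hi
  · convert Fin.snoc_castSucc (α := fun _ => Finset V) S' w
      ⟨min i n, Nat.lt_succ_of_le (min_le_right i n)⟩ using 2
    ext
    simp [hi, Nat.le_succ_of_le hi]
  · convert Fin.snoc_last (α := fun _ => Finset V) S' w using 2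
    ext
    simp only [Fin.val_last, inf_eq_right]
    omega

omit [Fintype V] [DecidableEq V] in
lemma pathSnoc_of_le {s : ℕ → Finset V} {n i : ℕ} (S' : Finset V) (hi : i ≤ n) :
    pathSnoc s n S' i = s i :=
  if_pos hi

omit [Fintype V] [DecidableEq V] in
lemma pathSnoc_succ (s : ℕ → Finset V) (n : ℕ) (S' : Finset V) : pathSnoc s n S' (n + 1) = S' :=
  if_neg (Nat.not_succ_le_self n)

omit [Fintype V] in
lemma pathWeight_nonneg (hκ : ∀ S S', 0 ≤ κ S S') {T : ℕ} (w : Fin (T + 1) → Finset V) :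
    0 ≤ pathWeight κ S₀ T w := by
  unfold pathWeight
  split_ifs
  exacts [prod_nonneg fun _ _ => hκ _ _, le_rfl]

omit [Fintype V] in
lemma pathWeight_snoc {n : ℕ} (w : Fin (n + 1) → Finset V) (S' : Finset V) :
    pathWeight κ S₀ (n + 1) (Fin.snoc w S' : Fin (n + 2) → Finset V) =
      pathWeight κ S₀ n w * κ (w (Fin.last n)) S' := by
  have h0 : (Fin.snoc w S' : Fin (n + 2) → Finset V) 0 = w 0 := Fin.snoc_castSucc (i := 0) ..
  simp only [pathWeight, h0, ite_mul, zero_mul, Fin.prod_univ_castSucc, Fin.succ_castSucc,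
    Fin.snoc_castSucc, Fin.succ_last, Fin.snoc_last]

lemma EpathN_eq_sum (T : ℕ) (f : (ℕ → Finset V) → ℝ) :
    EpathN κ S₀ T f = ∑ w, pathWeight κ S₀ T w * f (frozenPath T w) := by
  simp only [EpathN, pathWeight, ite_mul, zero_mul]
  rfl

lemma EpathN_zero (f : (ℕ → Finset V) → ℝ) : EpathN κ S₀ 0 f = f fun _ => S₀ := by
  rw [EpathN_eq_sum, Fintype.sum_eq_single (fun _ => S₀) fun w hw => ?_]
  · rw [pathWeight, if_pos rfl, Fin.prod_univ_zero, one_mul]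
    rfl
  · have : w 0 ≠ S₀ := fun h => hw (funext fun i => Fin.fin_one_eq_zero i ▸ h)
    simp only [pathWeight, if_neg this, zero_mul]

lemma EpathN_succ (n : ℕ) (f : (ℕ → Finset V) → ℝ) :
    EpathN κ S₀ (n + 1) f =
      EpathN κ S₀ n (fun s => ∑ S', κ (s n) S' * f (pathSnoc s n S')) := by
  rw [EpathN_eq_sum, EpathN_eq_sum,
    ← (Fin.snocEquiv fun _ => Finset V).sum_comp, Fintype.sum_prod_type, sum_comm]
  refine sum_congr rfl fun w _ => ?_
  have hsnoc : ∀ S', (Fin.snocEquiv fun _ => Finset V) (S', w) = Fin.snoc w S' := fun _ => rfl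
  simp only [hsnoc, pathWeight_snoc, frozenPath_snoc, frozenPath_self, mul_sum]
  exact sum_congr rfl fun S' _ => by ring

lemma EpathN_congr {T : ℕ} {f g : (ℕ → Finset V) → ℝ} (h : ∀ s, s 0 = S₀ → f s = g s) :
    EpathN κ S₀ T f = EpathN κ S₀ T g := by
  simp only [EpathN_eq_sum]
  refine sum_congr rfl fun w _ => ?_
  by_cases hw : w 0 = S₀
  · rw [h _ ((frozenPath_zero w).trans hw)]
  · simp [pathWeight, hw]

lemma EpathN_mono (hκ : ∀ S S', 0 ≤ κ S S') {T : ℕ} {f g : (ℕ → Finset V) → ℝ}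
    (h : ∀ s, f s ≤ g s) : EpathN κ S₀ T f ≤ EpathN κ S₀ T g := by
  simp only [EpathN_eq_sum]
  exact sum_le_sum fun w _ => mul_le_mul_of_nonneg_left (h _) (pathWeight_nonneg hκ w)

lemma EpathN_nonneg (hκ : ∀ S S', 0 ≤ κ S S') {T : ℕ} {f : (ℕ → Finset V) → ℝ}
    (h : ∀ s, 0 ≤ f s) : 0 ≤ EpathN κ S₀ T f := by
  rw [EpathN_eq_sum]
  exact sum_nonneg fun w _ => mul_nonneg (pathWeight_nonneg hκ w) (h _)

lemma EpathN_mul_le_sqrt {T : ℕ} (hκ : ∀ S S', 0 ≤ κ S S')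
    {f g : (ℕ → Finset V) → ℝ} (hf : ∀ s, 0 ≤ f s) :
    EpathN κ S₀ T (fun s => f s * g s) ≤
      √(EpathN κ S₀ T f) * √(EpathN κ S₀ T (fun s => f s * g s ^ 2)) := by
  simp only [EpathN_eq_sum, ← mul_assoc]
  exact sum_mul_le_sqrt_mul_sqrt_of_nonneg univ fun w _ =>
    mul_nonneg (pathWeight_nonneg hκ w) (hf _)

lemma EpathN_add {T : ℕ} (f g : (ℕ → Finset V) → ℝ) :
    EpathN κ S₀ T (fun s => f s + g s) = EpathN κ S₀ T f + EpathN κ S₀ T g := by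
  simp only [EpathN_eq_sum, mul_add, sum_add_distrib]

lemma EpathN_const_mul {T : ℕ} (c : ℝ) (f : (ℕ → Finset V) → ℝ) :
    EpathN κ S₀ T (fun s => c * f s) = c * EpathN κ S₀ T f := by
  simp only [EpathN_eq_sum, mul_sum, mul_left_comm]

lemma EpathN_sum {T : ℕ} {ι : Type*} (r : Finset ι) (f : ι → (ℕ → Finset V) → ℝ) :
    EpathN κ S₀ T (fun s => ∑ j ∈ r, f j s) = ∑ j ∈ r, EpathN κ S₀ T (f j) := by
  simp only [EpathN_eq_sum, mul_sum]
  exact sum_comm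

variable (hrow : ∀ S, ∑ S', κ S S' = 1)
include hrow

lemma EpathN_const {T : ℕ} (c : ℝ) : EpathN κ S₀ T (fun _ => c) = c := by
  induction T with
  | zero => rw [EpathN_zero]
  | succ n ih => simpa only [EpathN_succ, ← sum_mul, hrow, one_mul] using ih

lemma EpathN_apply_zero {T : ℕ} (g : Finset V → ℝ) : EpathN κ S₀ T (fun s => g (s 0)) = g S₀ :=
  (EpathN_congr fun _ hs => by rw [hs]).trans (EpathN_const hrow _)

lemma EpathN_succ_of_dependsOn {n : ℕ} {f : (ℕ → Finset V) → ℝ} (hf : DependsOn f (Set.Iic n)) :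
    EpathN κ S₀ (n + 1) f = EpathN κ S₀ n f := by
  rw [EpathN_succ]
  congr 1
  funext s
  simp only [hf fun i hi => pathSnoc_of_le _ hi, ← sum_mul, hrow, one_mul]

lemma EpathN_of_dependsOn {n T : ℕ} {f : (ℕ → Finset V) → ℝ} (hf : DependsOn f (Set.Iic n))
    (hn : n ≤ T) : EpathN κ S₀ T f = EpathN κ S₀ n f := by
  induction T, hn using Nat.le_induction with
  | base => rfl
  | succ m hm ih =>
    rw [EpathN_succ_of_dependsOn hrow (hf.mono (Set.Iic_subset_Iic.2 hm)), ih]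

/-- The tower property: given the path up to time `j`, the step `s j → s (j+1)` has law
`κ (s j) ·`. -/
lemma EpathN_mul_step {j T : ℕ} (hj : j < T) {A : (ℕ → Finset V) → ℝ}
    (hA : DependsOn A (Set.Iic j)) (B : Finset V → Finset V → ℝ) :
    EpathN κ S₀ T (fun s => A s * B (s j) (s (j + 1))) =
      EpathN κ S₀ T (fun s => A s * ∑ S', κ (s j) S' * B (s j) S') := by
  have h₁ : DependsOn (fun s => A s * B (s j) (s (j + 1))) (Set.Iic (j + 1)) := fun x y h => by
    simp only [hA fun i hi => h i (Nat.le_succ_of_le hi), h j (Nat.le_succ j),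
      h (j + 1) (Set.mem_Iic.2 le_rfl)]
  have h₂ : DependsOn (fun s => A s * ∑ S', κ (s j) S' * B (s j) S') (Set.Iic j) := fun x y h => by
    simp only [hA h, h j (Set.mem_Iic.2 le_rfl)]
  rw [EpathN_of_dependsOn hrow h₁ hj, EpathN_of_dependsOn hrow h₂ hj.le, EpathN_succ]
  congr 1
  funext s
  simp only [hA fun i hi => pathSnoc_of_le _ hi, pathSnoc_of_le _ le_rfl, pathSnoc_succ, mul_sum]
  exact sum_congr rfl fun _ _ => mul_left_comm _ _ _

omit hrow in
lemma EpathN_succ_eq_zero (h : ∀ S', κ S₀ S' = 0) (T : ℕ) (f : (ℕ → Finset V) → ℝ) :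
    EpathN κ S₀ (T + 1) f = 0 := by
  induction T generalizing f with
  | zero => simp [EpathN_succ, EpathN_zero, h]
  | succ n ih => rw [EpathN_succ, ih]

end PathExpectation

section StoppingTime

omit [Fintype V] [DecidableEq V]

lemma IsStopping.eq_of_agree {τ : (ℕ → Finset V) → ℕ} (hτ : IsStopping τ) {s s' : ℕ → Finset V}
    {t : ℕ} (hle : τ s ≤ t) (h : ∀ i ≤ t, s i = s' i) : τ s' = τ s :=
  hτ s s' (τ s) rfl fun i hi => (h i (hi.trans hle)).symm

lemma IsStopping.le_iff_of_agree {τ : (ℕ → Finset V) → ℕ} (hτ : IsStopping τ)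
    {s s' : ℕ → Finset V} {t : ℕ} (h : ∀ i ≤ t, s i = s' i) : τ s ≤ t ↔ τ s' ≤ t :=
  ⟨fun hle => (hτ.eq_of_agree hle h).symm ▸ hle,
    fun hle => (hτ.eq_of_agree hle fun i hi => (h i hi).symm) ▸ hle⟩

end StoppingTime

section Martingales

variable {κ : Finset V → Finset V → ℝ} {S₀ : Finset V} (hrow : ∀ S, ∑ S', κ S S' = 1)
include hrow

lemma EpathN_step {j T : ℕ} (hj : j < T) (B : Finset V → Finset V → ℝ) :
    EpathN κ S₀ T (fun s => B (s j) (s (j + 1))) =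
      EpathN κ S₀ T (fun s => ∑ S', κ (s j) S' * B (s j) S') := by
  simpa only [one_mul] using
    EpathN_mul_step hrow hj (A := fun _ => 1) (fun _ _ _ => rfl) B

lemma EpathN_harmonic {g : Finset V → ℝ} (hg : ∀ S, ∑ S', κ S S' * g S' = g S) {j T : ℕ}
    (hj : j ≤ T) : EpathN κ S₀ T (fun s => g (s j)) = g S₀ := by
  induction j with
  | zero => exact EpathN_apply_zero hrow g
  | succ j ih =>
    rw [EpathN_step hrow hj fun _ S' => g S']
    simpa only [hg] using ih (by omega)

lemma add_sum_EpathN_le_of_drift (hκ : ∀ S S', 0 ≤ κ S S') {h c : Finset V → ℝ}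
    (hd : ∀ S, h S + c S ≤ ∑ S', κ S S' * h S') {t T : ℕ} (ht : t ≤ T) :
    h S₀ + ∑ j ∈ range t, EpathN κ S₀ T (fun s => c (s j)) ≤
      EpathN κ S₀ T (fun s => h (s t)) := by
  induction t with
  | zero => simp [EpathN_apply_zero hrow]
  | succ t ih =>
    rw [sum_range_succ, EpathN_step hrow ht fun _ S' => h S', ← add_assoc]
    calc _ ≤ EpathN κ S₀ T (fun s => h (s t)) + EpathN κ S₀ T (fun s => c (s t)) :=
          by gcongr; exact ih (by omega)
      _ = EpathN κ S₀ T (fun s => h (s t) + c (s t)) := (EpathN_add _ _).symm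
      _ ≤ _ := EpathN_mono hκ fun s => hd (s t)

/-- Optional stopping; `hY` says that `Y` is determined by the path up to time `τ`. -/
lemma EpathN_stopped {g : Finset V → ℝ} (hg : ∀ S, ∑ S', κ S S' * g S' = g S)
    {τ : (ℕ → Finset V) → ℕ} (hτ : IsStopping τ) {T : ℕ} (hbd : ∀ s, τ s ≤ T)
    {Y : (ℕ → Finset V) → ℝ} (hY : ∀ s s', (∀ i ≤ τ s, s i = s' i) → Y s = Y s') :
    EpathN κ S₀ T (fun s => g (s T) * Y s) = EpathN κ S₀ T (fun s => g (s (τ s)) * Y s) := by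
  let X : ℕ → (ℕ → Finset V) → ℝ := fun t s => g (s (max (τ s) t)) * Y s
  have hstep : ∀ t < T, EpathN κ S₀ T (X (t + 1)) = EpathN κ S₀ T (X t) := by
    intro t ht
    let A : (ℕ → Finset V) → ℝ := fun s => if τ s ≤ t then Y s else 0
    have hA : DependsOn A (Set.Iic t) := fun s s' h => by
      by_cases hs : τ s ≤ t
      · simp only [A, if_pos hs, if_pos ((hτ.le_iff_of_agree h).1 hs)]
        exact hY s s' fun i hi => h i (hi.trans hs)
      · simp only [A, if_neg hs, if_neg (mt (hτ.le_iff_of_agree h).2 hs)]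
    have hX : ∀ s, X (t + 1) s = X t s + A s * (g (s (t + 1)) - g (s t)) := fun s => by
      by_cases hs : τ s ≤ t
      · simp only [X, A, if_pos hs, max_eq_right hs, max_eq_right (hs.trans t.le_succ)]
        ring
      · simp only [X, A, if_neg hs, max_eq_left (not_le.1 hs).le,
          max_eq_left (Nat.succ_le_of_lt (not_le.1 hs))]
        ring
    have hcentered : ∀ S, ∑ S', κ S S' * (g S' - g S) = 0 := fun S => by
      simp only [mul_sub, sum_sub_distrib, hg, ← sum_mul, hrow, one_mul, sub_self]
    rw [funext hX, EpathN_add, EpathN_mul_step hrow ht hA fun S S' => g S' - g S]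
    simp only [hcentered, mul_zero, EpathN_const hrow, add_zero]
  have hconst : ∀ t ≤ T, EpathN κ S₀ T (X t) = EpathN κ S₀ T (X 0) := by
    intro t ht
    induction t with
    | zero => rfl
    | succ t ih => rw [hstep t ht, ih (by omega)]
  simpa only [X, max_eq_right (hbd _), max_eq_left (Nat.zero_le _)] using hconst T le_rfl

end Martingales

section CostBound

variable {S₀ : Finset V} {T : ℕ}

lemma costPath_nonneg (s : ℕ → Finset V) (t : ℕ) : 0 ≤ costPath G s t :=
  add_nonneg (vol_nonneg _) (sum_nonneg fun _ _ => add_nonneg (vol_nonneg _) (bdry_nonneg _))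

lemma costPath_congr {s s' : ℕ → Finset V} {t : ℕ} (h : ∀ i ≤ t, s i = s' i) :
    costPath G s t = costPath G s' t := by
  rw [costPath, costPath, h 0 t.zero_le]
  congr 1
  refine sum_congr rfl fun j hj => ?_
  rw [h j (mem_range.1 hj).le, h (j + 1) (mem_range.1 hj)]

lemma costPath_eq_sum_range {t : ℕ} (s : ℕ → Finset V) (ht : t ≤ T) :
    costPath G s t = vol G (s 0) + ∑ j ∈ range T,
      (if j < t then 1 else 0) * (vol G (s (j + 1) ∆ s j) + bdry G (s j)) := by
  have : range t = (range T).filter (· < t) := by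
    ext
    simp only [mem_range, mem_filter]
    omega
  rw [costPath, this, sum_filter]
  simp only [ite_mul, one_mul, zero_mul]

lemma EpathN_costPath_le {τ : (ℕ → Finset V) → ℕ} (hτ : IsStopping τ) (hbd : ∀ s, τ s ≤ T) :
    EpathN (Kk G) S₀ T (fun s => costPath G s (τ s)) ≤
      vol G S₀ + 2 * ∑ j ∈ range T, EpathN (Kk G) S₀ T (fun s => bdry G (s j)) := by
  rw [funext fun s => costPath_eq_sum_range s (hbd s), EpathN_add, EpathN_sum,
    EpathN_apply_zero sum_Kk, mul_sum]
  gcongr with j hj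
  have hA : DependsOn (fun s => if j < τ s then (1 : ℝ) else 0) (Set.Iic j) := fun s s' h => by
    simp only [← not_le, hτ.le_iff_of_agree h]
  rw [EpathN_mul_step sum_Kk (mem_range.1 hj) hA fun S S' => vol G (S' ∆ S) + bdry G S,
    ← EpathN_const_mul]
  refine EpathN_mono Kk_nonneg fun s => ?_
  simp only [mul_add, sum_add_distrib, sum_Kk_mul_vol_symmDiff, ← sum_mul, sum_Kk, one_mul]
  split_ifs <;> linarith [bdry_nonneg (G := G) (s j)]

end CostBound

section BoundarySum

variable {S₀ : Finset V} {T : ℕ}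

omit [DecidableEq V] in
lemma vol_mul_log_vol_nonneg (S : Finset V) : 0 ≤ vol G S * log (vol G S) := by
  rw [vol_eq_natCast]
  exact mul_nonneg (Nat.cast_nonneg _) (log_natCast_nonneg _)

omit [DecidableEq V] in
lemma vol_mul_log_vol_le (S : Finset V) :
    vol G S * log (vol G S) ≤ vol G S * log (vol G univ) := by
  rcases (vol_nonneg (G := G) S).eq_or_lt with h | h
  · simp [← h]
  · exact mul_le_mul_of_nonneg_left (log_le_log h (sum_le_sum_of_subset_of_nonneg
      (subset_univ S) fun _ _ _ => Nat.cast_nonneg _)) h.le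

lemma sum_EpathN_vol_mul_phiCond_sq_le :
    ∑ j ∈ range T, EpathN (Kk G) S₀ T (fun s => vol G (s j) * phiCond G (s j) ^ 2) ≤
      4 * (vol G S₀ * log (vol G univ)) := by
  have hd : ∀ S, vol G S * log (vol G S) + 1 / 4 * (vol G S * phiCond G S ^ 2) ≤
      ∑ S', Kk G S S' * (vol G S' * log (vol G S')) := fun S => by
    linarith [add_le_sum_Kk_mul_vol_mul_log (G := G) S]
  have hdrift := add_sum_EpathN_le_of_drift (S₀ := S₀) sum_Kk Kk_nonneg hd (le_refl T)
  have hend : EpathN (Kk G) S₀ T (fun s => vol G (s T) * log (vol G (s T))) ≤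
      vol G S₀ * log (vol G univ) := by
    calc _ ≤ EpathN (Kk G) S₀ T (fun s => log (vol G univ) * vol G (s T)) :=
          EpathN_mono Kk_nonneg fun s => (vol_mul_log_vol_le (s T)).trans_eq (mul_comm _ _)
      _ = vol G S₀ * log (vol G univ) := by
          rw [EpathN_const_mul, EpathN_harmonic sum_Kk sum_Kk_mul_vol le_rfl, mul_comm]
  simp only [EpathN_const_mul, ← mul_sum] at hdrift
  linarith [vol_mul_log_vol_nonneg (G := G) S₀]

lemma sum_EpathN_bdry_le :
    ∑ j ∈ range T, EpathN (Kk G) S₀ T (fun s => bdry G (s j)) ≤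
      2 * vol G S₀ * √(T * log (vol G univ)) := by
  set a := fun j => EpathN (Kk G) S₀ T (fun s => vol G (s j) * phiCond G (s j) ^ 2)
  have hv := vol_nonneg (G := G) S₀
  have hL : 0 ≤ log (vol G univ) := by rw [vol_eq_natCast]; exact log_natCast_nonneg _
  have hcs : ∀ j ∈ range T, EpathN (Kk G) S₀ T (fun s => bdry G (s j)) ≤ √(vol G S₀) * √(a j) :=
    fun j hj => by
      simp only [← vol_mul_phiCond, a]
      refine (EpathN_mul_le_sqrt Kk_nonneg fun s => vol_nonneg (s j)).trans_eq ?_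
      rw [EpathN_harmonic sum_Kk sum_Kk_mul_vol (mem_range.1 hj).le]
  have ha : ∀ j, 0 ≤ a j := fun j =>
    EpathN_nonneg Kk_nonneg fun s => mul_nonneg (vol_nonneg (s j)) (sq_nonneg _)
  have hsqrt : ∑ j ∈ range T, √(a j) ≤ √T * √(∑ j ∈ range T, a j) := by
    have := sum_mul_le_sqrt_mul_sqrt_of_nonneg (range T) (w := fun _ => 1) (f := fun j => √(a j))
      fun _ _ => zero_le_one
    simpa [sq_sqrt, ha] using this
  calc ∑ j ∈ range T, EpathN (Kk G) S₀ T (fun s => bdry G (s j))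
      ≤ √(vol G S₀) * ∑ j ∈ range T, √(a j) := by rw [mul_sum]; exact sum_le_sum hcs
    _ ≤ √(vol G S₀) * (√T * √(4 * (vol G S₀ * log (vol G univ)))) := by
        gcongr
        exact hsqrt.trans (by gcongr; exact sum_EpathN_vol_mul_phiCond_sq_le)
    _ = 2 * vol G S₀ * √(T * log (vol G univ)) := by
        rw [sqrt_mul (by norm_num), sqrt_mul hv, sqrt_mul (Nat.cast_nonneg T),
          show (4 : ℝ) = 2 ^ 2 by norm_num, sqrt_sq zero_le_two]
        linear_combination (2 * √T * √(log (vol G univ))) * mul_self_sqrt hv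

end BoundarySum

section VolumeBiased

lemma vol_mul_Khat (S S' : Finset V) : vol G S * Khat G S S' = Kk G S S' * vol G S' := by
  rcases (vol_nonneg (G := G) S).eq_or_lt with h | h
  · rw [← h, zero_mul, Kk_mul_vol_eq_zero h.symm]
  · rw [Khat]
    field_simp

lemma vol_mul_EpathN_Khat (S₀ : Finset V) (T : ℕ) (q : (ℕ → Finset V) → ℝ) :
    vol G S₀ * EpathN (Khat G) S₀ T q = EpathN (Kk G) S₀ T (fun s => vol G (s T) * q s) := by
  induction T generalizing q with
  | zero => simp only [EpathN_zero]
  | succ T ih =>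
    rw [EpathN_succ, ih, EpathN_succ]
    congr 1
    funext s
    simp only [mul_sum, pathSnoc_succ, ← mul_assoc, vol_mul_Khat]

lemma Khat_eq_zero_of_vol_eq_zero {S : Finset V} (h : vol G S = 0) (S' : Finset V) :
    Khat G S S' = 0 := by
  rw [Khat, h, div_zero, zero_mul]

end VolumeBiased

theorem statement17_general (G : SimpleGraph V) [DecidableRel G.Adj]
    (S₀ : Finset V) (T : ℕ) (hT : 0 < T)
    (τ : (ℕ → Finset V) → ℕ) (hstop : IsStopping τ) (hbd : ∀ s, τ s ≤ T) :
    EpathN (Khat G) S₀ T (fun s => costPath G s (τ s) / vol G (s (τ s))) ≤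
      1 + 4 * Real.sqrt (T * Real.log (vol G Finset.univ)) := by
  rcases (vol_nonneg (G := G) S₀).eq_or_lt with h₀ | h₀
  · obtain ⟨T, rfl⟩ := Nat.exists_eq_add_one_of_ne_zero hT.ne'
    rw [EpathN_succ_eq_zero (Khat_eq_zero_of_vol_eq_zero h₀.symm)]
    positivity
  rw [← mul_le_mul_iff_of_pos_left h₀, vol_mul_EpathN_Khat]
  calc EpathN (Kk G) S₀ T (fun s => vol G (s T) * (costPath G s (τ s) / vol G (s (τ s))))
      = EpathN (Kk G) S₀ T (fun s => vol G (s (τ s)) * (costPath G s (τ s) / vol G (s (τ s)))) :=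
        EpathN_stopped sum_Kk sum_Kk_mul_vol hstop hbd fun s s' h => by
          rw [hstop.eq_of_agree le_rfl h, costPath_congr h, h _ le_rfl]
    _ ≤ EpathN (Kk G) S₀ T (fun s => costPath G s (τ s)) :=
        EpathN_mono Kk_nonneg fun s => (mul_div_assoc' _ _ _).trans_le
          (div_le_of_le_mul₀ (vol_nonneg _) (costPath_nonneg _ _) (mul_comm _ _).le)
    _ ≤ vol G S₀ + 2 * ∑ j ∈ range T, EpathN (Kk G) S₀ T (fun s => bdry G (s j)) :=
        EpathN_costPath_le hstop hbd
    _ ≤ vol G S₀ + 2 * (2 * vol G S₀ * √(T * log (vol G univ))) := by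
        gcongr
        exact sum_EpathN_bdry_le
    _ = vol G S₀ * (1 + 4 * √(T * log (vol G univ))) := by ring

/-- Theorem 9: for the volume-biased evolving set process started from a nonempty set
`S₀`, a positive integer `T`, and any stopping time `τ` bounded by `T`,
`Ê_{S₀}[cost(S₀,…,S_τ)/μ(S_τ)] ≤ 1 + 4 √(T log μ(V))`. -/
theorem statement17 (G : SimpleGraph V) [DecidableRel G.Adj]
    (S₀ : Finset V) (hS₀ : S₀.Nonempty) (T : ℕ) (hT : 0 < T)
    (τ : (ℕ → Finset V) → ℕ) (hstop : IsStopping τ) (hbd : ∀ s, τ s ≤ T) :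
    EpathN (Khat G) S₀ T (fun s => costPath G s (τ s) / vol G (s (τ s))) ≤
      1 + 4 * Real.sqrt (T * Real.log (vol G Finset.univ)) :=
  statement17_general G S₀ T hT τ hstop hbd
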